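/- Let n₁, n₂ ≥ 2 and work in ℝ^{n₁+n₂} = ℝ^{n₁} × ℝ^{n₂}, with P¹ = ℝ^{n₁} × {0}, P² = {0} × ℝ^{n₂} and orthogonal projections p¹, p². For unit vectors x, y ∈ ℝ^{n₁+n₂}, the following are equivalent: (i) |x∧y| = 1 and |p¹(x)∧p¹(y)| + |p²(x)∧p²(y)| = 1; (ii) there exist α ∈ [0,π/2], unit vectors u₁, u₂ ∈ P¹ with u₁ ⊥ u₂, and unit vectors v₁, v₂ ∈ P² with v₁ ⊥ v₂, such that x = cos α·u₁ + sin α·v₁ and y = cos α·u₂ + sin α·v₂. -/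

import Mathlib

open Set Metric MeasureTheory Filter Pointwise
open scoped ENNReal RealInnerProductSpace NNReal

noncomputable section

/-- `Euc n` is the Euclidean space `ℝⁿ`. -/
abbrev Euc (n : ℕ) : Type := EuclideanSpace ℝ (Fin n)

variable {n : ℕ}

/-- A cone centered at `0`. -/
def IsCone0 (C : Set (Euc n)) : Prop :=
  (0 : Euc n) ∈ C ∧ ∀ t : ℝ, 0 < t → t • C = C

/-- `f` is (the time-one map of) a Lipschitz deformation in the set `U`. -/
def IsDeformationIn (U : Set (Euc n)) (f : Euc n → Euc n) : Prop :=
  ∃ φ : ℝ → Euc n → Euc n,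
    (∀ x ∈ U, φ 0 x = x) ∧
    (∀ t ∈ Icc (0:ℝ) 1, MapsTo (φ t) U U) ∧
    ContinuousOn (fun p : ℝ × Euc n => φ p.1 p.2) (Icc (0:ℝ) 1 ×ˢ U) ∧
    (∃ L : ℝ≥0, LipschitzOnWith L (φ 1) U) ∧
    (∀ x ∈ U, φ 1 x = f x) ∧
    closure (⋃ t ∈ Icc (0:ℝ) 1,
        ({x ∈ U | φ t x ≠ x} ∪ φ t '' {x ∈ U | φ t x ≠ x})) ⊆ U ∧
    IsCompact (closure (⋃ t ∈ Icc (0:ℝ) 1,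
        ({x ∈ U | φ t x ≠ x} ∪ φ t '' {x ∈ U | φ t x ≠ x})))

/-- `E` is a `d`-dimensional Almgren minimal set in the open set `U`
(`E ⊆ U` relatively closed). -/
def IsAlmgrenMinimalIn (d : ℕ) (U E : Set (Euc n)) : Prop :=
  E ⊆ U ∧ closure E ∩ U ⊆ E ∧
  (∀ (x : Euc n) (r : ℝ), closedBall x r ⊆ U → μH[(d:ℝ)] (E ∩ closedBall x r) < ⊤) ∧
  ∀ f : Euc n → Euc n, IsDeformationIn U f →
    μH[(d:ℝ)] (E \ f '' E) ≤ μH[(d:ℝ)] (f '' E \ E)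

/-- A set is reduced if it has positive `H^d` measure in every ball centered on it. -/
def IsReducedSet (d : ℕ) (E : Set (Euc n)) : Prop :=
  ∀ x ∈ E, ∀ r : ℝ, 0 < r → 0 < μH[(d:ℝ)] (E ∩ ball x r)

/-- A (reduced) `d`-dimensional Almgren minimal cone in `ℝⁿ`. -/
def IsAlmgrenMinimalCone (d : ℕ) (C : Set (Euc n)) : Prop :=
  IsClosed C ∧ IsCone0 C ∧ IsReducedSet d C ∧ IsAlmgrenMinimalIn d univ C

/-- The class `F(E,U)` of deformations of `E` in `U`. -/
def deformClass (U E : Set (Euc n)) : Set (Set (Euc n)) :=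
  {F | ∃ f, IsDeformationIn U f ∧ F = (E \ U) ∪ f '' (E ∩ U)}

/-- Convergence in local Hausdorff distance on every compact set. -/
def LocHausTendsto (S : ℕ → Set (Euc n)) (F : Set (Euc n)) : Prop :=
  ∀ K : Set (Euc n), IsCompact K →
    Tendsto (fun k => (⨆ y ∈ S k ∩ K, infDist y F) ⊔ (⨆ y ∈ F ∩ K, infDist y (S k)))
      atTop (nhds 0)

/-- The class `F̄(E,U)` of limits of deformations of `E` in `U`. -/
def limDeformClass (d : ℕ) (U E : Set (Euc n)) : Set (Set (Euc n)) :=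
  {F | F ⊆ closure U ∧ IsClosed F ∧
    (∃ S : ℕ → Set (Euc n), (∀ k, S k ∈ deformClass U E) ∧ LocHausTendsto S F) ∧
    (∀ (x : Euc n) (r : ℝ), μH[(d:ℝ)] (F ∩ closedBall x r) < ⊤) ∧
    μH[(d:ℝ)] ((F ∩ frontier U) \ E) = 0}

/-- `C` is Almgren unique in the domain `U`. -/
def AlmgrenUniqueIn (d : ℕ) (C U : Set (Euc n)) : Prop :=
  ∀ E ∈ limDeformClass d U C,
    μH[(d:ℝ)] E = (⨅ F ∈ limDeformClass d U C, μH[(d:ℝ)] F) → E = C ∩ closure U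

/-- `C` is Almgren unique (in every domain). -/
def AlmgrenUnique (d : ℕ) (C : Set (Euc n)) : Prop :=
  ∀ U : Set (Euc n), IsOpen U → IsConnected U → AlmgrenUniqueIn d C U

/-- `F` is a `δ`-sliding deformation of `E` in `cl(U)`. -/
def IsSlidingDeformation (δ : ℝ) (U E F : Set (Euc n)) : Prop :=
  ∃ φ : ℝ → Euc n → Euc n,
    (∀ x ∈ closure U, φ 0 x = x) ∧
    (∀ t ∈ Icc (0:ℝ) 1, MapsTo (φ t) (closure U) (closure U)) ∧
    ContinuousOn (fun p : ℝ × Euc n => φ p.1 p.2) (Icc (0:ℝ) 1 ×ˢ closure U) ∧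
    (∃ L : ℝ≥0, LipschitzOnWith L (φ 1) (closure U)) ∧
    (∀ t ∈ Icc (0:ℝ) 1, MapsTo (φ t) (frontier U) (frontier U)) ∧
    (∀ t ∈ Icc (0:ℝ) 1, ∀ x ∈ E ∩ frontier U, ‖φ t x - x‖ < δ) ∧
    F = φ 1 '' E

/-- The class `F̄_δ(E, cl U)` of limits of `δ`-sliding deformations of `E`. -/
def slidingLimClass (d : ℕ) (δ : ℝ) (U E : Set (Euc n)) : Set (Set (Euc n)) :=
  {F | F ⊆ closure U ∧ IsClosed F ∧
    (∃ S : ℕ → Set (Euc n), (∀ k, IsSlidingDeformation δ U E (S k)) ∧ LocHausTendsto S F) ∧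
    (∀ (x : Euc n) (r : ℝ), μH[(d:ℝ)] (F ∩ closedBall x r) < ⊤) ∧
    μH[(d:ℝ)] ((F ∩ frontier U) \ E) = 0}

/-- `E` is `δ`-sliding minimal in `cl(U)`. -/
def IsSlidingMinimal (d : ℕ) (δ : ℝ) (U E : Set (Euc n)) : Prop :=
  ∀ F ∈ slidingLimClass d δ U E, μH[(d:ℝ)] (E \ F) ≤ μH[(d:ℝ)] (F \ E)

/-- The trace of a cone on the unit sphere. -/
def spherePart (K : Set (Euc n)) : Set (Euc n) := K ∩ sphere (0 : Euc n) 1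

/-- A point of `K ∩ ∂B(0,1)` at which the net `K ∩ ∂B(0,1)` is not locally
homeomorphic to an interval (a `Y` point of the net). -/
def IsYPoint (K : Set (Euc n)) (a : Euc n) : Prop :=
  a ∈ spherePart K ∧
  ¬ ∃ W : Set (Euc n), IsOpen W ∧ a ∈ W ∧
      Nonempty ((spherePart K ∩ W : Set (Euc n)) ≃ₜ (Set.Ioo (0:ℝ) 1))

/-- The convex domain `U(K,η)` associated to a `2`-dimensional minimal cone `K`. -/
def UDomain (K : Set (Euc n)) (η : ℝ) : Set (Euc n) :=
  {x ∈ ball (0 : Euc n) 1 |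
    (∀ y ∈ spherePart K, ⟪x, y⟫ < 1 - η) ∧
    (∀ a : Euc n, IsYPoint K a → ⟪x, a⟫ < 1 - 2 * η)}

/-- `K` is sliding stable: for some small `η` and some `δ > 0`, `K` is
`δ`-sliding minimal in `cl(U(K,η))`. -/
def SlidingStable (d : ℕ) (K : Set (Euc n)) : Prop :=
  ∃ η δ : ℝ, 0 < η ∧ η < 1 / 100 ∧ 0 < δ ∧
    IsSlidingMinimal d δ (UDomain K η) (K ∩ closure (UDomain K η))

/-- The minimal angle between two cones: the largest `θ ∈ [0,π/2]` such that
`|⟨u,v⟩| ≤ cos θ‖u‖‖v‖` for all `u ∈ A`, `v ∈ B`. -/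
def minAngle (A B : Set (Euc n)) : ℝ :=
  sSup {θ : ℝ | θ ∈ Icc 0 (Real.pi / 2) ∧
    ∀ u ∈ A, ∀ v ∈ B, |⟪u, v⟫| ≤ Real.cos θ * (‖u‖ * ‖v‖)}

/-- `|x₁ ∧ ⋯ ∧ x_d|`: the `d`-volume of the parallelepiped spanned by `x₁,…,x_d`,
i.e. the square root of the Gram determinant. -/
def wedgeNorm {d : ℕ} (x : Fin d → Euc n) : ℝ :=
  Real.sqrt (Matrix.det (Matrix.of fun i j => ⟪x i, x j⟫))

/-- The isometric inclusion `ℝ^{n₁} → ℝ^{n₁} × {0} ⊆ ℝ^{n₁+n₂}`. -/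
def pad1 (n₁ n₂ : ℕ) (x : Euc n₁) : Euc (n₁ + n₂) :=
  (EuclideanSpace.equiv (Fin (n₁ + n₂)) ℝ).symm
    (fun i => if h : (i : ℕ) < n₁ then x ⟨i, h⟩ else 0)

/-- The isometric inclusion `ℝ^{n₂} → {0} × ℝ^{n₂} ⊆ ℝ^{n₁+n₂}`. -/
def pad2 (n₁ n₂ : ℕ) (x : Euc n₂) : Euc (n₁ + n₂) :=
  (EuclideanSpace.equiv (Fin (n₁ + n₂)) ℝ).symm
    (fun i => if _ : (i : ℕ) < n₁ then 0 else x ⟨(i : ℕ) - n₁, by omega⟩)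

/-- The orthogonal union `E₁ ∪⊥ E₂ = (E₁ × {0}) ∪ ({0} × E₂) ⊆ ℝ^{n₁+n₂}`. -/
def orthUnion (n₁ n₂ : ℕ) (E₁ : Set (Euc n₁)) (E₂ : Set (Euc n₂)) : Set (Euc (n₁ + n₂)) :=
  pad1 n₁ n₂ '' E₁ ∪ pad2 n₁ n₂ '' E₂

/-- The projection `ℝ^{n₁+n₂} → ℝ^{n₁}` on the first factor. -/
def proj1 (n₁ n₂ : ℕ) (x : Euc (n₁ + n₂)) : Euc n₁ :=
  (EuclideanSpace.equiv (Fin n₁) ℝ).symm fun i => x (Fin.castAdd n₂ i)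

/-- The projection `ℝ^{n₁+n₂} → ℝ^{n₂}` on the second factor. -/
def proj2 (n₁ n₂ : ℕ) (x : Euc (n₁ + n₂)) : Euc n₂ :=
  (EuclideanSpace.equiv (Fin n₂) ℝ).symm fun i => x (Fin.natAdd n₁ i)

/-- Orthogonal projection of `ℝ^{n₁+n₂}` onto `P¹ = ℝ^{n₁} × {0}`. -/
def projTo1 (n₁ n₂ : ℕ) (x : Euc (n₁ + n₂)) : Euc (n₁ + n₂) := pad1 n₁ n₂ (proj1 n₁ n₂ x)

/-- Orthogonal projection of `ℝ^{n₁+n₂}` onto `P² = {0} × ℝ^{n₂}`. -/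
def projTo2 (n₁ n₂ : ℕ) (x : Euc (n₁ + n₂)) : Euc (n₁ + n₂) := pad2 n₁ n₂ (proj2 n₁ n₂ x)

/-- `T` is the approximate tangent `d`-plane of `F` at `x`. -/
def IsApproxTangent (d : ℕ) (F : Set (Euc n)) (x : Euc n) (T : Submodule ℝ (Euc n)) : Prop :=
  Module.finrank ℝ T = d ∧
  0 < Filter.limsup (fun r : ℝ => μH[(d:ℝ)] (F ∩ ball x r) / ENNReal.ofReal (r ^ d))
      (nhdsWithin 0 (Ioi 0)) ∧
  ∀ ε : ℝ, 0 < ε →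
    Tendsto (fun r : ℝ =>
        μH[(d:ℝ)] ((F ∩ ball x r) ∩ {y | ε * ‖y - x‖ < infDist (y - x) (T : Set (Euc n))}) /
          ENNReal.ofReal (r ^ d))
      (nhdsWithin 0 (Ioi 0)) (nhds 0)

/-- `F` is `d`-rectifiable. -/
def IsRectifiable (d : ℕ) (F : Set (Euc n)) : Prop :=
  ∃ f : ℕ → (Euc d → Euc n),
    (∀ k, ∃ L : ℝ≥0, LipschitzWith L (f k)) ∧
    μH[(d:ℝ)] (F \ ⋃ k, range (f k)) = 0

/-- Orthogonal projection onto a submodule, as a map of the ambient space. -/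
def oproj (P : Submodule ℝ (Euc n)) (v : Euc n) : Euc n :=
  (P.orthogonalProjection v : Euc n)

/-- A nonzero vector `z` has angle `α` between `P¹` and `P²`. -/
def HasAngleBetween (P₁ P₂ : Submodule ℝ (Euc n)) (α : ℝ) (z : Euc n) : Prop :=
  ‖oproj P₁ z‖ = Real.cos α * ‖z‖ ∧ ‖oproj P₂ z‖ = Real.sin α * ‖z‖

/-- `T` is a `d`-analytic subspace between `P¹` and `P²` with angle `α`. -/
def IsAnalyticSubspace (P₁ P₂ : Submodule ℝ (Euc n)) (α : ℝ) (T : Submodule ℝ (Euc n)) : Prop :=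
  ∀ z ∈ T, z ≠ 0 → HasAngleBetween P₁ P₂ α z

/-- The point `(a,b) ∈ ℝ²`. -/
def mk2 (a b : ℝ) : Euc 2 := (EuclideanSpace.equiv (Fin 2) ℝ).symm ![a, b]

/-- The sector `R_α = {(r,θ) : r₀ ≤ r ≤ 1, 0 ≤ θ ≤ π/α}` (polar coordinates). -/
def sectorR (α : ℕ) (r₀ : ℝ) : Set (Euc 2) :=
  {x | ∃ r θ : ℝ, r₀ ≤ r ∧ r ≤ 1 ∧ 0 ≤ θ ∧ θ ≤ Real.pi / α ∧
    x = mk2 (r * Real.cos θ) (r * Real.sin θ)}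

/-- The inner arc `L_α = {(r₀,θ) : 0 ≤ θ ≤ π/α}`. -/
def sectorL (α : ℕ) (r₀ : ℝ) : Set (Euc 2) :=
  {x | ∃ θ : ℝ, 0 ≤ θ ∧ θ ≤ Real.pi / α ∧
    x = mk2 (r₀ * Real.cos θ) (r₀ * Real.sin θ)}

/-- The outer arc `K_α = {(1,θ) : 0 ≤ θ ≤ π/α}`. -/
def sectorK (α : ℕ) : Set (Euc 2) :=
  {x | ∃ θ : ℝ, 0 ≤ θ ∧ θ ≤ Real.pi / α ∧ x = mk2 (Real.cos θ) (Real.sin θ)}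

/-- The annular sector `{(r,θ) : s/4 ≤ r ≤ 2s, 0 ≤ θ ≤ θ₀}`. -/
def annR (θ₀ s : ℝ) : Set (Euc 2) :=
  {x | ∃ r θ : ℝ, s / 4 ≤ r ∧ r ≤ 2 * s ∧ 0 ≤ θ ∧ θ ≤ θ₀ ∧
    x = mk2 (r * Real.cos θ) (r * Real.sin θ)}

/-- The annular sector `{(r,θ) : s/4 ≤ r ≤ s, 0 ≤ θ ≤ θ₀}`. -/
def annR' (θ₀ s : ℝ) : Set (Euc 2) :=
  {x | ∃ r θ : ℝ, s / 4 ≤ r ∧ r ≤ s ∧ 0 ≤ θ ∧ θ ≤ θ₀ ∧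
    x = mk2 (r * Real.cos θ) (r * Real.sin θ)}

/-!
Split `x = x¹ + x²` and `y = y¹ + y²` along `ℝ^{n₁} ⊕ ℝ^{n₂}`. By Cauchy–Schwarz and AM–GM,
`|x¹∧y¹| + |x²∧y²| ≤ ‖x¹‖‖y¹‖ + ‖x²‖‖y²‖ ≤ (‖x‖² + ‖y‖²)/2 = 1`, so equality forces
`x¹ ⊥ y¹`, `x² ⊥ y²`, `‖x¹‖ = ‖y¹‖ = cos α` and `‖x²‖ = ‖y²‖ = sin α`; normalising the four
components gives `u₁, u₂, v₁, v₂` (any orthonormal pair will do for a vanishing component, which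
is where `n₁, n₂ ≥ 2` enters). Conversely, such `x, y` are orthonormal, and their projections
span parallelograms of areas `cos² α` and `sin² α`.
-/

section Padding

variable {n₁ n₂ : ℕ}

@[simp]
lemma proj1_apply (x : Euc (n₁ + n₂)) (i : Fin n₁) : proj1 n₁ n₂ x i = x (Fin.castAdd n₂ i) :=
  rfl

@[simp]
lemma proj2_apply (x : Euc (n₁ + n₂)) (i : Fin n₂) : proj2 n₁ n₂ x i = x (Fin.natAdd n₁ i) :=
  rfl

@[simp]
lemma pad1_castAdd (u : Euc n₁) (i : Fin n₁) : pad1 n₁ n₂ u (Fin.castAdd n₂ i) = u i := by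
  simp [pad1]

@[simp]
lemma pad1_natAdd (u : Euc n₁) (i : Fin n₂) : pad1 n₁ n₂ u (Fin.natAdd n₁ i) = 0 := by
  simp [pad1]

@[simp]
lemma pad2_castAdd (v : Euc n₂) (i : Fin n₁) : pad2 n₁ n₂ v (Fin.castAdd n₂ i) = 0 := by
  simp [pad2]

@[simp]
lemma pad2_natAdd (v : Euc n₂) (i : Fin n₂) : pad2 n₁ n₂ v (Fin.natAdd n₁ i) = v i := by
  simp [pad2]

lemma ext_proj1_proj2 {x y : Euc (n₁ + n₂)} (h₁ : proj1 n₁ n₂ x = proj1 n₁ n₂ y)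
    (h₂ : proj2 n₁ n₂ x = proj2 n₁ n₂ y) : x = y := by
  ext i
  refine Fin.addCases (fun j => ?_) (fun j => ?_) i
  · simpa using congrArg (· j) h₁
  · simpa using congrArg (· j) h₂

@[simp] lemma proj1_pad1 (u : Euc n₁) : proj1 n₁ n₂ (pad1 n₁ n₂ u) = u := by ext; simp
@[simp] lemma proj2_pad1 (u : Euc n₁) : proj2 n₁ n₂ (pad1 n₁ n₂ u) = 0 := by ext; simp
@[simp] lemma proj1_pad2 (v : Euc n₂) : proj1 n₁ n₂ (pad2 n₁ n₂ v) = 0 := by ext; simp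
@[simp] lemma proj2_pad2 (v : Euc n₂) : proj2 n₁ n₂ (pad2 n₁ n₂ v) = v := by ext; simp

lemma pad1_proj1_add_pad2_proj2 (x : Euc (n₁ + n₂)) :
    pad1 n₁ n₂ (proj1 n₁ n₂ x) + pad2 n₁ n₂ (proj2 n₁ n₂ x) = x :=
  ext_proj1_proj2 (by ext; simp) (by ext; simp)

lemma pad1_smul (r : ℝ) (u : Euc n₁) : pad1 n₁ n₂ (r • u) = r • pad1 n₁ n₂ u :=
  ext_proj1_proj2 (by ext; simp) (by ext; simp)

lemma pad2_smul (r : ℝ) (v : Euc n₂) : pad2 n₁ n₂ (r • v) = r • pad2 n₁ n₂ v :=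
  ext_proj1_proj2 (by ext; simp) (by ext; simp)

lemma inner_eq_inner_proj1_add_inner_proj2 (x y : Euc (n₁ + n₂)) :
    ⟪x, y⟫ = ⟪proj1 n₁ n₂ x, proj1 n₁ n₂ y⟫ + ⟪proj2 n₁ n₂ x, proj2 n₁ n₂ y⟫ := by
  simp only [PiLp.inner_apply, Fin.sum_univ_add, proj1_apply, proj2_apply]

@[simp]
lemma inner_pad1 (u u' : Euc n₁) : ⟪pad1 n₁ n₂ u, pad1 n₁ n₂ u'⟫ = ⟪u, u'⟫ := by
  rw [inner_eq_inner_proj1_add_inner_proj2]; simp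

@[simp]
lemma inner_pad2 (v v' : Euc n₂) : ⟪pad2 n₁ n₂ v, pad2 n₁ n₂ v'⟫ = ⟪v, v'⟫ := by
  rw [inner_eq_inner_proj1_add_inner_proj2]; simp

@[simp]
lemma inner_pad1_pad2 (u : Euc n₁) (v : Euc n₂) : ⟪pad1 n₁ n₂ u, pad2 n₁ n₂ v⟫ = 0 := by
  rw [inner_eq_inner_proj1_add_inner_proj2]; simp

@[simp]
lemma inner_pad2_pad1 (v : Euc n₂) (u : Euc n₁) : ⟪pad2 n₁ n₂ v, pad1 n₁ n₂ u⟫ = 0 := by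
  rw [real_inner_comm, inner_pad1_pad2]

@[simp]
lemma norm_pad1 (u : Euc n₁) : ‖pad1 n₁ n₂ u‖ = ‖u‖ := by
  rw [norm_eq_sqrt_real_inner, inner_pad1, ← norm_eq_sqrt_real_inner]

@[simp]
lemma norm_pad2 (v : Euc n₂) : ‖pad2 n₁ n₂ v‖ = ‖v‖ := by
  rw [norm_eq_sqrt_real_inner, inner_pad2, ← norm_eq_sqrt_real_inner]

lemma norm_sq_eq_norm_proj1_sq_add_norm_proj2_sq (x : Euc (n₁ + n₂)) :
    ‖x‖ ^ 2 = ‖proj1 n₁ n₂ x‖ ^ 2 + ‖proj2 n₁ n₂ x‖ ^ 2 := by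
  simp only [← real_inner_self_eq_norm_sq, ← inner_eq_inner_proj1_add_inner_proj2]

lemma projTo1_pad1_add_pad2 (u : Euc n₁) (v : Euc n₂) :
    projTo1 n₁ n₂ (pad1 n₁ n₂ u + pad2 n₁ n₂ v) = pad1 n₁ n₂ u := by
  simp [projTo1, proj1]

lemma projTo2_pad1_add_pad2 (u : Euc n₁) (v : Euc n₂) :
    projTo2 n₁ n₂ (pad1 n₁ n₂ u + pad2 n₁ n₂ v) = pad2 n₁ n₂ v := by
  simp [projTo2, proj2]

end Padding

lemma wedgeNorm_pair (p q : Euc n) :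
    wedgeNorm ![p, q] = √(‖p‖ ^ 2 * ‖q‖ ^ 2 - ⟪p, q⟫ ^ 2) := by
  rw [wedgeNorm, Matrix.det_fin_two]
  simp only [Matrix.of_apply, Matrix.cons_val_zero, Matrix.cons_val_one, real_inner_comm q p,
    real_inner_self_eq_norm_sq, sq]

lemma wedgeNorm_pair_le (p q : Euc n) : wedgeNorm ![p, q] ≤ ‖p‖ * ‖q‖ := by
  rw [wedgeNorm_pair, Real.sqrt_le_iff]
  exact ⟨by positivity, by nlinarith [sq_nonneg ⟪p, q⟫]⟩

lemma wedgeNorm_pair_eq_norm_mul_norm_iff (p q : Euc n) :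
    wedgeNorm ![p, q] = ‖p‖ * ‖q‖ ↔ ⟪p, q⟫ = 0 := by
  have hcs : ⟪p, q⟫ ^ 2 ≤ ‖p‖ ^ 2 * ‖q‖ ^ 2 := by
    rw [← mul_pow, sq_le_sq, abs_mul, abs_norm, abs_norm]
    exact abs_real_inner_le_norm p q
  rw [wedgeNorm_pair, Real.sqrt_eq_iff_eq_sq (by linarith) (by positivity), mul_pow,
    sub_eq_self, sq_eq_zero_iff]

lemma inner_eq_zero_and_norm_eq_of_wedgeNorm_add_eq_one {m k : ℕ} {a c : Euc m} {b d : Euc k}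
    (hab : ‖a‖ ^ 2 + ‖b‖ ^ 2 = 1) (hcd : ‖c‖ ^ 2 + ‖d‖ ^ 2 = 1)
    (h : wedgeNorm ![a, c] + wedgeNorm ![b, d] = 1) :
    (⟪a, c⟫ = 0 ∧ ‖a‖ = ‖c‖) ∧ (⟪b, d⟫ = 0 ∧ ‖b‖ = ‖d‖) := by
  have hac := wedgeNorm_pair_le a c
  have hbd := wedgeNorm_pair_le b d
  have amgm_ac := two_mul_le_add_sq ‖a‖ ‖c‖
  have amgm_bd := two_mul_le_add_sq ‖b‖ ‖d‖
  have hac_eq : (‖a‖ - ‖c‖) ^ 2 = 0 := by nlinarith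
  have hbd_eq : (‖b‖ - ‖d‖) ^ 2 = 0 := by nlinarith
  refine ⟨⟨(wedgeNorm_pair_eq_norm_mul_norm_iff a c).1 (by linarith), ?_⟩,
    ⟨(wedgeNorm_pair_eq_norm_mul_norm_iff b d).1 (by linarith), ?_⟩⟩
  · simpa [sub_eq_zero] using hac_eq
  · simpa [sub_eq_zero] using hbd_eq

lemma exists_orthonormal_pair_of_inner_eq_zero {E : Type*} [NormedAddCommGroup E]
    [InnerProductSpace ℝ E] [FiniteDimensional ℝ E] (hE : 2 ≤ Module.finrank ℝ E) {a c : E}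
    (hac : ‖a‖ = ‖c‖) (h : ⟪a, c⟫ = 0) :
    ∃ u₁ u₂ : E, ‖u₁‖ = 1 ∧ ‖u₂‖ = 1 ∧ ⟪u₁, u₂⟫ = 0 ∧ a = ‖a‖ • u₁ ∧ c = ‖a‖ • u₂ := by
  rcases eq_or_ne ‖a‖ 0 with ha | ha
  · have hc : c = 0 := norm_eq_zero.1 (hac ▸ ha)
    let e := stdOrthonormalBasis ℝ E
    refine ⟨e ⟨0, by omega⟩, e ⟨1, by omega⟩, e.orthonormal.1 _, e.orthonormal.1 _,
      e.orthonormal.2 (by simp), by simp [norm_eq_zero.1 ha], by simp [hc, ha]⟩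
  · refine ⟨‖a‖⁻¹ • a, ‖a‖⁻¹ • c, ?_, ?_, ?_, (smul_inv_smul₀ ha a).symm,
      (smul_inv_smul₀ ha c).symm⟩
    · rw [norm_smul, norm_inv, norm_norm, inv_mul_cancel₀ ha]
    · rw [norm_smul, norm_inv, norm_norm, ← hac, inv_mul_cancel₀ ha]
    · rw [real_inner_smul_left, real_inner_smul_right, h, mul_zero, mul_zero]

lemma exists_mem_Icc_cos_eq_sin_eq {p q : ℝ} (hp : 0 ≤ p) (hq : 0 ≤ q) (h : p ^ 2 + q ^ 2 = 1) :
    ∃ α ∈ Icc (0 : ℝ) (Real.pi / 2), Real.cos α = p ∧ Real.sin α = q := by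
  have hp1 : p ≤ 1 := by nlinarith
  refine ⟨Real.arccos p, ⟨Real.arccos_nonneg p, Real.arccos_le_pi_div_two.2 hp⟩,
    Real.cos_arccos (by linarith) hp1, ?_⟩
  rw [Real.sin_arccos, ← h, add_sub_cancel_left, Real.sqrt_sq hq]

lemma exists_angle_orthonormal_of_wedgeNorm_add_eq_one {m k : ℕ} (hm : 2 ≤ m) (hk : 2 ≤ k)
    {a c : Euc m} {b d : Euc k} (hab : ‖a‖ ^ 2 + ‖b‖ ^ 2 = 1) (hcd : ‖c‖ ^ 2 + ‖d‖ ^ 2 = 1)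
    (h : wedgeNorm ![a, c] + wedgeNorm ![b, d] = 1) :
    ∃ α ∈ Icc (0 : ℝ) (Real.pi / 2), ∃ u₁ u₂ : Euc m, ∃ v₁ v₂ : Euc k,
      ‖u₁‖ = 1 ∧ ‖u₂‖ = 1 ∧ ‖v₁‖ = 1 ∧ ‖v₂‖ = 1 ∧ ⟪u₁, u₂⟫ = 0 ∧ ⟪v₁, v₂⟫ = 0 ∧
      a = Real.cos α • u₁ ∧ c = Real.cos α • u₂ ∧ b = Real.sin α • v₁ ∧ d = Real.sin α • v₂ := by
  obtain ⟨⟨hac, hac'⟩, ⟨hbd, hbd'⟩⟩ := inner_eq_zero_and_norm_eq_of_wedgeNorm_add_eq_one hab hcd h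
  obtain ⟨u₁, u₂, hu₁, hu₂, hu, ha, hc⟩ :=
    exists_orthonormal_pair_of_inner_eq_zero (by simpa using hm) hac' hac
  obtain ⟨v₁, v₂, hv₁, hv₂, hv, hb, hd⟩ :=
    exists_orthonormal_pair_of_inner_eq_zero (by simpa using hk) hbd' hbd
  obtain ⟨α, hα, hcos, hsin⟩ := exists_mem_Icc_cos_eq_sin_eq (norm_nonneg _) (norm_nonneg _) hab
  exact ⟨α, hα, u₁, u₂, v₁, v₂, hu₁, hu₂, hv₁, hv₂, hu, hv, hcos ▸ ha, hcos ▸ hc,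
    hsin ▸ hb, hsin ▸ hd⟩

lemma wedgeNorm_pair_smul_of_orthonormal (r : ℝ) {u₁ u₂ : Euc n} (hu₁ : ‖u₁‖ = 1)
    (hu₂ : ‖u₂‖ = 1) (hu : ⟪u₁, u₂⟫ = 0) : wedgeNorm ![r • u₁, r • u₂] = r ^ 2 := by
  rw [(wedgeNorm_pair_eq_norm_mul_norm_iff _ _).2 (by simp [real_inner_smul_left,
    real_inner_smul_right, hu]), norm_smul, norm_smul, hu₁, hu₂, Real.norm_eq_abs]
  simp [sq]

lemma wedgeNorm_pad1_pair {n₁ n₂ : ℕ} (a c : Euc n₁) :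
    wedgeNorm ![pad1 n₁ n₂ a, pad1 n₁ n₂ c] = wedgeNorm ![a, c] := by
  simp only [wedgeNorm_pair, norm_pad1, inner_pad1]

lemma wedgeNorm_pad2_pair {n₁ n₂ : ℕ} (b d : Euc n₂) :
    wedgeNorm ![pad2 n₁ n₂ b, pad2 n₁ n₂ d] = wedgeNorm ![b, d] := by
  simp only [wedgeNorm_pair, norm_pad2, inner_pad2]

/-- **Structure of unit simple 2-vectors with `|p¹ξ| + |p²ξ| = 1`.** For unit vectors
`x, y ∈ ℝ^{n₁+n₂}`, one has `|x∧y| = 1` and `|p¹x∧p¹y| + |p²x∧p²y| = 1` iff `x, y` can be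
written as `x = cos α·u₁ + sin α·v₁`, `y = cos α·u₂ + sin α·v₂` with `u₁ ⊥ u₂` unit in `P¹`
and `v₁ ⊥ v₂` unit in `P²`. -/
theorem unit_simple_two_vector_characterization
    (n₁ n₂ : ℕ) (h₁ : 2 ≤ n₁) (h₂ : 2 ≤ n₂)
    (x y : Euc (n₁ + n₂)) (hx : ‖x‖ = 1) (hy : ‖y‖ = 1) :
    (wedgeNorm ![x, y] = 1 ∧
      wedgeNorm ![projTo1 n₁ n₂ x, projTo1 n₁ n₂ y] +
        wedgeNorm ![projTo2 n₁ n₂ x, projTo2 n₁ n₂ y] = 1) ↔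
    ∃ α ∈ Icc (0 : ℝ) (Real.pi / 2), ∃ u₁ u₂ v₁ v₂ : Euc (n₁ + n₂),
      u₁ ∈ range (pad1 n₁ n₂) ∧ u₂ ∈ range (pad1 n₁ n₂) ∧
      v₁ ∈ range (pad2 n₁ n₂) ∧ v₂ ∈ range (pad2 n₁ n₂) ∧
      ‖u₁‖ = 1 ∧ ‖u₂‖ = 1 ∧ ‖v₁‖ = 1 ∧ ‖v₂‖ = 1 ∧
      ⟪u₁, u₂⟫ = 0 ∧ ⟪v₁, v₂⟫ = 0 ∧
      x = Real.cos α • u₁ + Real.sin α • v₁ ∧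
      y = Real.cos α • u₂ + Real.sin α • v₂ := by
  constructor
  · rintro ⟨-, hsum⟩
    simp only [projTo1, projTo2, wedgeNorm_pad1_pair, wedgeNorm_pad2_pair] at hsum
    obtain ⟨α, hα, u₁, u₂, v₁, v₂, hu₁, hu₂, hv₁, hv₂, hu, hv, ha, hc, hb, hd⟩ :=
      exists_angle_orthonormal_of_wedgeNorm_add_eq_one h₁ h₂
        (by rw [← norm_sq_eq_norm_proj1_sq_add_norm_proj2_sq, hx, one_pow])
        (by rw [← norm_sq_eq_norm_proj1_sq_add_norm_proj2_sq, hy, one_pow]) hsum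
    refine ⟨α, hα, pad1 n₁ n₂ u₁, pad1 n₁ n₂ u₂, pad2 n₁ n₂ v₁, pad2 n₁ n₂ v₂, ⟨u₁, rfl⟩,
      ⟨u₂, rfl⟩, ⟨v₁, rfl⟩, ⟨v₂, rfl⟩, by simpa, by simpa, by simpa, by simpa, by simpa,
      by simpa, ?_, ?_⟩
    · rw [← pad1_proj1_add_pad2_proj2 x, ha, hb, pad1_smul, pad2_smul]
    · rw [← pad1_proj1_add_pad2_proj2 y, hc, hd, pad1_smul, pad2_smul]
  · rintro ⟨α, -, _, _, _, _, ⟨u₁, rfl⟩, ⟨u₂, rfl⟩, ⟨v₁, rfl⟩, ⟨v₂, rfl⟩, hu₁, hu₂, hv₁, hv₂,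
      hu, hv, rfl, rfl⟩
    simp only [norm_pad1, norm_pad2, inner_pad1, inner_pad2] at hu₁ hu₂ hv₁ hv₂ hu hv
    refine ⟨?_, ?_⟩
    · rw [(wedgeNorm_pair_eq_norm_mul_norm_iff _ _).2, hx, hy, one_mul]
      simp [inner_add_left, inner_add_right, real_inner_smul_left, real_inner_smul_right, hu, hv]
    · simp only [← pad1_smul, ← pad2_smul, projTo1_pad1_add_pad2, projTo2_pad1_add_pad2,
        wedgeNorm_pad1_pair, wedgeNorm_pad2_pair]
      rw [wedgeNorm_pair_smul_of_orthonormal _ hu₁ hu₂ hu,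
        wedgeNorm_pair_smul_of_orthonormal _ hv₁ hv₂ hv, Real.cos_sq_add_sin_sq]
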